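/- arXiv:1210.0230 — 2 statements merged into one kernel-verified Lean document; each statement's English description precedes it below -/
import Mathlib

section
/- If the Nash paths of the switching players cover the ring, i.e., ∪_{i∈[h]} N_i = R, then M(π^N) ≤ (2/3)·ℓ^N(R), where ℓ^N(R)=ℓ(R,π^N) is the total ring latency in the Nash equilibrium. -/
open Finset

/-- The ring with `n` nodes: edges are indexed by `ZMod n`, where edge `e` joins
node `e` to node `e + 1`.  The clockwise arc from node `s` to node `t` consists of
the edges `s, s+1, …, t-1`. -/
def ringArc (n : ℕ) [NeZero n] (s t : ZMod n) : Finset (ZMod n) :=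
  Finset.univ.filter fun e => (e - s).val < (t - s).val

/-- A selfish ring routing (SRR) instance on a ring with `n` nodes (hence `n` links),
with players indexed by a finite type `ι`.  Each link `e` has a linear latency
function `x ↦ a e * x + b e` with nonnegative coefficients, and player `i` must
connect source `s i` to destination `t i` (distinct nodes) along one of the two arcs. -/
structure SRR (n : ℕ) [NeZero n] (ι : Type) [Fintype ι] where
  a : ZMod n → ℝ
  b : ZMod n → ℝ
  a_nonneg : ∀ e, 0 ≤ a e
  b_nonneg : ∀ e, 0 ≤ b e
  s : ι → ZMod n
  t : ι → ZMod n
  st_ne : ∀ i, s i ≠ t i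

namespace SRR

variable {n : ℕ} [NeZero n] {ι : Type} [Fintype ι] [DecidableEq ι]

/-- A routing assigns to each player one of the two arcs between its terminals:
`true` means the clockwise arc from `s i` to `t i`, `false` the complementary arc. -/
def pathOf (I : SRR n ι) (π : ι → Bool) (i : ι) : Finset (ZMod n) :=
  if π i then ringArc n (I.s i) (I.t i) else ringArc n (I.t i) (I.s i)

/-- The number of players whose path uses link `e` under routing `π`. -/
def load (I : SRR n ι) (π : ι → Bool) (e : ZMod n) : ℕ :=
  (Finset.univ.filter fun j => e ∈ I.pathOf π j).card

/-- The latency `ℓ(P, π)` of a set of links `P` under routing `π`. -/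
noncomputable def cost (I : SRR n ι) (π : ι → Bool) (P : Finset (ZMod n)) : ℝ :=
  ∑ e ∈ P, (I.a e * I.load π e + I.b e)

/-- `M(π)`: the maximum latency experienced by a player under routing `π`. -/
noncomputable def Mval (I : SRR n ι) (π : ι → Bool) : ℝ :=
  ⨆ i : ι, I.cost π (I.pathOf π i)

/-- `π` is a Nash equilibrium: no player strictly decreases its latency by
unilaterally switching to the complementary arc. -/
def Nash (I : SRR n ι) (π : ι → Bool) : Prop :=
  ∀ i, I.cost π (I.pathOf π i) ≤
    I.cost (Function.update π i (!(π i))) (I.pathOf (Function.update π i (!(π i))) i)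

/-- `π` is an optimal routing: it minimizes the maximum player latency. -/
def Optimal (I : SRR n ι) (π : ι → Bool) : Prop :=
  ∀ π' : ι → Bool, I.Mval π ≤ I.Mval π'

/-- The set of switching players: those whose path in `πN` differs from their
path in `πQ`. -/
def switching (I : SRR n ι) (πN πQ : ι → Bool) : Finset ι :=
  Finset.univ.filter fun i => I.pathOf πN i ≠ I.pathOf πQ i

/-- `πQ` is an optimal routing chosen, among all optimal routings, to minimize the
number of switching players with respect to the Nash routing `πN`. -/
def MinSwitchOpt (I : SRR n ι) (πN πQ : ι → Bool) : Prop :=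
  I.Optimal πQ ∧
    ∀ π' : ι → Bool, I.Optimal π' → (I.switching πN πQ).card ≤ (I.switching πN π').card

end SRR

lemma ringArc_compl {n : ℕ} [NeZero n] {s t : ZMod n} (h : s ≠ t) :
    ringArc n t s = Finset.univ \ ringArc n s t := by
  ext e
  simp only [ringArc, Finset.mem_filter, Finset.mem_univ, true_and, Finset.mem_sdiff,
    not_lt]
  have hd : t - s ≠ 0 := sub_ne_zero.mpr (Ne.symm h)
  have h1 : e - t = (e - s) + -(t - s) := by ring
  have h2 : s - t = -(t - s) := by ring
  rw [h1, h2, ZMod.val_add, ZMod.neg_val]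
  simp only [if_neg hd]
  have hu := ZMod.val_lt (e - s)
  have hdlt := ZMod.val_lt (t - s)
  have hd0 : (t - s).val ≠ 0 := by
    simpa [ZMod.val_eq_zero] using hd
  set u := (e - s).val with hu'
  set d := (t - s).val with hd'
  rcases Nat.lt_or_ge u d with hc | hc
  · have h3 : (u + (n - d)) % n = u + (n - d) := Nat.mod_eq_of_lt (by omega)
    rw [h3]; omega
  · have h5 : (u + (n - d)) % n = (u + (n - d) - n) % n := Nat.mod_eq_sub_mod (by omega)
    have h6 : (u + (n - d) - n) % n = u - d := by
      have h7 : u + (n - d) - n = u - d := by omega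
      rw [h7]; exact Nat.mod_eq_of_lt (by omega)
    rw [h5, h6]; omega

namespace SRR

variable {n : ℕ} [NeZero n] {ι : Type} [Fintype ι] [DecidableEq ι]

lemma pathOf_update_self (I : SRR n ι) (π : ι → Bool) (j : ι) :
    I.pathOf (Function.update π j (!(π j))) j = Finset.univ \ I.pathOf π j := by
  unfold SRR.pathOf
  rw [Function.update_self]
  cases h : π j with
  | true => simp only [h, Bool.not_true, if_false, if_true]
            exact ringArc_compl (I.st_ne j)
  | false => simp only [h, Bool.not_false, if_true, if_false]
             exact ringArc_compl (Ne.symm (I.st_ne j))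

lemma pathOf_update_ne (I : SRR n ι) (π : ι → Bool) (j i : ι) (v : Bool) (hij : i ≠ j) :
    I.pathOf (Function.update π j v) i = I.pathOf π i := by
  unfold SRR.pathOf
  rw [Function.update_of_ne hij]

lemma load_update (I : SRR n ι) (π : ι → Bool) (j : ι) (e : ZMod n)
    (he : e ∉ I.pathOf π j) :
    I.load (Function.update π j (!(π j))) e = I.load π e + 1 := by
  unfold SRR.load
  have key : (Finset.univ.filter fun i => e ∈ I.pathOf (Function.update π j (!(π j))) i)
      = insert j (Finset.univ.filter fun i => e ∈ I.pathOf π i) := by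
    ext i
    by_cases hi : i = j
    · subst hi
      simp [pathOf_update_self, he]
    · simp [pathOf_update_ne I π j i _ hi, hi]
  rw [key, Finset.card_insert_of_notMem (by simp [he])]

lemma load_pos_of_cover (I : SRR n ι) (πN πQ : ι → Bool)
    (hcov : (I.switching πN πQ).biUnion (I.pathOf πN) = Finset.univ) (e : ZMod n) :
    1 ≤ I.load πN e := by
  have he : e ∈ (I.switching πN πQ).biUnion (I.pathOf πN) := by
    rw [hcov]; exact Finset.mem_univ e
  obtain ⟨i, _, hi⟩ := Finset.mem_biUnion.mp he
  have : i ∈ Finset.univ.filter fun j => e ∈ I.pathOf πN j := by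
    simp [hi]
  exact Finset.card_pos.mpr ⟨i, this⟩

end SRR

/-- if the Nash paths of the switching players cover the ring,
then `M(πN) ≤ (2/3) * ℓ^N(R)`. -/
theorem srr_covering_max_vs_ring {n k : ℕ} [NeZero n] (I : SRR n (Fin k))
    (πN πQ : Fin k → Bool) (hN : I.Nash πN) (hQ : I.MinSwitchOpt πN πQ)
    (hcov : (I.switching πN πQ).biUnion (I.pathOf πN) = Finset.univ) :
    I.Mval πN ≤ (2 / 3) * I.cost πN Finset.univ := by
  have hload : ∀ e, 1 ≤ I.load πN e := I.load_pos_of_cover πN πQ hcov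
  have hcost_nonneg : 0 ≤ I.cost πN Finset.univ := by
    apply Finset.sum_nonneg
    intro e _
    have := I.a_nonneg e
    have := I.b_nonneg e
    positivity
  apply Real.iSup_le _ (by linarith)
  intro j
  set P := I.pathOf πN j with hP
  set π' := Function.update πN j (!(πN j)) with hπ'
  -- deviation cost
  have hdev : I.cost π' (I.pathOf π' j)
      = I.cost πN (Finset.univ \ P) + ∑ e ∈ Finset.univ \ P, I.a e := by
    rw [I.pathOf_update_self πN j, ← hP]
    unfold SRR.cost
    rw [← Finset.sum_add_distrib]
    apply Finset.sum_congr rfl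
    intro e he
    have he' : e ∉ P := (Finset.mem_sdiff.mp he).2
    rw [I.load_update πN j e he']
    push_cast
    ring
  have hbound : ∑ e ∈ Finset.univ \ P, I.a e ≤ I.cost πN (Finset.univ \ P) := by
    apply Finset.sum_le_sum
    intro e _
    have h1 : (1 : ℝ) ≤ (I.load πN e : ℝ) := by exact_mod_cast hload e
    have ha := I.a_nonneg e
    have hb := I.b_nonneg e
    nlinarith
  have hsplit : I.cost πN (Finset.univ \ P) + I.cost πN P = I.cost πN Finset.univ := by
    unfold SRR.cost
    exact Finset.sum_sdiff (Finset.subset_univ P)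
  have hnash := hN j
  rw [← hπ'] at hnash
  -- hnash : cost πN P ≤ cost π' (pathOf π' j)
  have : I.cost πN P ≤ 2 * I.cost πN (Finset.univ \ P) := by
    calc I.cost πN P ≤ I.cost π' (I.pathOf π' j) := hnash
    _ = I.cost πN (Finset.univ \ P) + ∑ e ∈ Finset.univ \ P, I.a e := hdev
    _ ≤ 2 * I.cost πN (Finset.univ \ P) := by linarith
  linarith
end

section
/- If ∪_{i∈[h]} N_i = R and h ≤ 2, then ℓ^N(R) ≤ 3·M(π*), where ℓ^N(R)=ℓ(R,π^N). -/
open Finset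

section Aux

variable {n : ℕ} [NeZero n]

lemma mem_ringArc_compl {s t : ZMod n} (h : s ≠ t) (e : ZMod n) :
    e ∈ ringArc n t s ↔ e ∉ ringArc n s t := by
  simp only [ringArc, Finset.mem_filter, Finset.mem_univ, true_and, not_lt]
  have hd : t - s ≠ 0 := sub_ne_zero.mpr h.symm
  have h1 : e - t = (e - s) + -(t - s) := by ring
  have h2 : s - t = -(t - s) := by ring
  rw [h1, h2, ZMod.val_add]
  have hneg : (-(t - s)).val = n - (t - s).val := by
    rw [ZMod.neg_val]; simp [hd]
  have hx : (e - s).val < n := ZMod.val_lt _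
  have hdlt : (t - s).val < n := ZMod.val_lt _
  have hdpos : 0 < (t - s).val := by
    rcases Nat.eq_zero_or_pos (t - s).val with h0 | h0
    · exact absurd ((ZMod.val_eq_zero _).mp h0) hd
    · exact h0
  rw [hneg]
  rcases lt_or_ge (e - s).val (t - s).val with hc | hc
  · rw [Nat.mod_eq_of_lt (by omega)]
    constructor <;> intro <;> omega
  · have he : (e - s).val + (n - (t - s).val) = ((e - s).val - (t - s).val) + n := by omega
    rw [he, Nat.add_mod_right, Nat.mod_eq_of_lt (by omega)]
    constructor <;> intro <;> omega

lemma t_notMem_ringArc (s t : ZMod n) : t ∉ ringArc n s t := by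
  simp [ringArc]

namespace SRR

variable {ι : Type} [Fintype ι] [DecidableEq ι]

lemma pathOf_congr (I : SRR n ι) {π π' : ι → Bool} {i : ι} (h : π i = π' i) :
    I.pathOf π i = I.pathOf π' i := by
  unfold SRR.pathOf; rw [h]

lemma mem_pathOf_compl (I : SRR n ι) {π π' : ι → Bool} {i : ι} (h : π i ≠ π' i)
    (e : ZMod n) : e ∈ I.pathOf π' i ↔ e ∉ I.pathOf π i := by
  unfold SRR.pathOf
  cases hb : π i <;> cases hb' : π' i <;> simp_all
  · exact mem_ringArc_compl (I.st_ne i).symm e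
  · exact mem_ringArc_compl (I.st_ne i) e

lemma exists_notMem_pathOf (I : SRR n ι) (π : ι → Bool) (i : ι) :
    ∃ e, e ∉ I.pathOf π i := by
  unfold SRR.pathOf
  cases π i <;> simp
  · exact ⟨I.s i, t_notMem_ringArc _ _⟩
  · exact ⟨I.t i, t_notMem_ringArc _ _⟩

end SRR

end Aux

/-- if the Nash paths of the switching players cover the ring and
`h ≤ 2`, then `ℓ^N(R) ≤ 3 * M(πQ)`. -/
theorem srr_covering_ring_latency_h_le_two {n k : ℕ} [NeZero n] (I : SRR n (Fin k))
    (πN πQ : Fin k → Bool) (hN : I.Nash πN) (hQ : I.MinSwitchOpt πN πQ)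
    (hcov : (I.switching πN πQ).biUnion (I.pathOf πN) = Finset.univ)
    (hh : (I.switching πN πQ).card ≤ 2) :
    I.cost πN Finset.univ ≤ 3 * I.Mval πQ := by
  have hc3 : (I.switching πN πQ).card = 0 ∨ (I.switching πN πQ).card = 1 ∨
      (I.switching πN πQ).card = 2 := by omega
  rcases hc3 with hc | hc | hc
  · -- h = 0 : impossible, the empty union cannot cover the ring
    rw [Finset.card_eq_zero] at hc
    rw [hc, Finset.biUnion_empty] at hcov
    have h0 : (0 : ZMod n) ∈ (∅ : Finset (ZMod n)) := hcov ▸ Finset.mem_univ 0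
    simp at h0
  · -- h = 1 : impossible, a single arc cannot cover the ring
    obtain ⟨i, hi⟩ := Finset.card_eq_one.mp hc
    rw [hi, Finset.singleton_biUnion] at hcov
    obtain ⟨e, he⟩ := I.exists_notMem_pathOf πN i
    exact absurd (hcov ▸ Finset.mem_univ e) he
  · -- h = 2
    obtain ⟨i, j, hij, hS⟩ := Finset.card_eq_two.mp hc
    have hiS : i ∈ I.switching πN πQ := by rw [hS]; simp
    have hjS : j ∈ I.switching πN πQ := by rw [hS]; simp
    have hpathi : I.pathOf πN i ≠ I.pathOf πQ i := by
      simpa [SRR.switching] using hiS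
    have hpathj : I.pathOf πN j ≠ I.pathOf πQ j := by
      simpa [SRR.switching] using hjS
    have hbi : πN i ≠ πQ i := fun h => hpathi (I.pathOf_congr h)
    have hbj : πN j ≠ πQ j := fun h => hpathj (I.pathOf_congr h)
    have compl1 : ∀ e, e ∈ I.pathOf πQ i ↔ e ∉ I.pathOf πN i :=
      I.mem_pathOf_compl hbi
    have compl2 : ∀ e, e ∈ I.pathOf πQ j ↔ e ∉ I.pathOf πN j :=
      I.mem_pathOf_compl hbj
    have hoth : ∀ l, l ≠ i → l ≠ j → I.pathOf πN l = I.pathOf πQ l := by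
      intro l h1 h2
      by_contra hne
      have : l ∈ I.switching πN πQ := by simp [SRR.switching, hne]
      rw [hS] at this
      simp [h1, h2] at this
    have hcov' : ∀ e, e ∈ I.pathOf πN i ∨ e ∈ I.pathOf πN j := by
      intro e
      have := hcov ▸ Finset.mem_univ e
      rw [hS] at this
      simpa [Finset.mem_biUnion] using this
    have hsub : ∀ e, e ∈ I.pathOf πQ i → e ∈ I.pathOf πN j := fun e he =>
      (hcov' e).resolve_left ((compl1 e).mp he)
    -- loads agree on C1 := pathOf πQ i
    have load_eq : ∀ e ∈ I.pathOf πQ i, I.load πQ e = I.load πN e := by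
      intro e he
      have heP1 : e ∉ I.pathOf πN i := (compl1 e).mp he
      have heP2 : e ∈ I.pathOf πN j := hsub e he
      have heC2 : e ∉ I.pathOf πQ j := fun h => ((compl2 e).mp h) heP2
      unfold SRR.load
      have hset : Finset.univ.filter (fun l => e ∈ I.pathOf πQ l)
          = insert i ((Finset.univ.filter (fun l => e ∈ I.pathOf πN l)).erase j) := by
        ext l
        by_cases hl1 : l = i
        · subst hl1; simp [he]
        · by_cases hl2 : l = j
          · subst hl2; simp [heC2, Ne.symm, hl1]
          · simp [Finset.mem_insert, hl1, hl2, hoth l hl1 hl2]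
      have hjmem : j ∈ Finset.univ.filter (fun l => e ∈ I.pathOf πN l) := by simp [heP2]
      have hpos : 0 < (Finset.univ.filter (fun l => e ∈ I.pathOf πN l)).card :=
        Finset.card_pos.mpr ⟨j, hjmem⟩
      rw [hset, Finset.card_insert_of_notMem (by simp [heP1]),
        Finset.card_erase_of_mem hjmem]
      omega
    -- C1 is the complement of P1
    have hcompl : I.pathOf πQ i = (I.pathOf πN i)ᶜ := by
      ext e; simp [Finset.mem_compl, compl1 e]
    have hsplit : I.cost πN Finset.univ
        = I.cost πN (I.pathOf πN i) + I.cost πN (I.pathOf πQ i) := by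
      unfold SRR.cost
      rw [hcompl, Finset.sum_add_sum_compl]
    -- Nash inequality
    set π' := Function.update πN i (!(πN i)) with hπ'
    have hbQ : πQ i = !(πN i) := by
      revert hbi; cases πN i <;> cases πQ i <;> simp
    have hπ'i : π' i = πQ i := by
      rw [hπ', Function.update_self, hbQ]
    have hpath' : I.pathOf π' i = I.pathOf πQ i := I.pathOf_congr hπ'i
    have hload' : ∀ e ∈ I.pathOf πQ i, I.load π' e = I.load πN e + 1 := by
      intro e he
      unfold SRR.load
      have hset : Finset.univ.filter (fun l => e ∈ I.pathOf π' l)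
          = insert i (Finset.univ.filter (fun l => e ∈ I.pathOf πN l)) := by
        ext l
        by_cases hl : l = i
        · subst hl
          simp [hpath' ▸ he]
        · have : I.pathOf π' l = I.pathOf πN l :=
            I.pathOf_congr (Function.update_of_ne hl _ _)
          simp [Finset.mem_insert, hl, this]
      rw [hset, Finset.card_insert_of_notMem (by simp [(compl1 e).mp he])]
    have hcostπ' : I.cost π' (I.pathOf πQ i)
        = I.cost πN (I.pathOf πQ i) + ∑ e ∈ I.pathOf πQ i, I.a e := by
      unfold SRR.cost
      rw [← Finset.sum_add_distrib]
      apply Finset.sum_congr rfl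
      intro e he
      rw [hload' e he]
      push_cast
      ring
    have hnash : I.cost πN (I.pathOf πN i) ≤ I.cost π' (I.pathOf πQ i) := by
      have := hN i
      rwa [← hπ', hpath'] at this
    -- cost πN C1 = cost πQ C1
    have hcostC1 : I.cost πN (I.pathOf πQ i) = I.cost πQ (I.pathOf πQ i) := by
      unfold SRR.cost
      apply Finset.sum_congr rfl
      intro e he
      rw [load_eq e he]
    -- cost πQ C1 ≤ Mval
    have hC1Q : I.cost πQ (I.pathOf πQ i) ≤ I.Mval πQ := by
      unfold SRR.Mval
      exact le_ciSup (Set.Finite.bddAbove (Set.finite_range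
        (fun l => I.cost πQ (I.pathOf πQ l)))) i
    have hsumA : ∑ e ∈ I.pathOf πQ i, I.a e ≤ I.cost πQ (I.pathOf πQ i) := by
      unfold SRR.cost
      apply Finset.sum_le_sum
      intro e he
      have hg : 0 < I.load πQ e := Finset.card_pos.mpr ⟨i, by simp [he]⟩
      have hg' : (1 : ℝ) ≤ (I.load πQ e : ℝ) := by exact_mod_cast hg
      nlinarith [I.a_nonneg e, I.b_nonneg e]
    linarith
end
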